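/- arXiv:2302.13658 — 2 statements merged into one kernel-verified Lean document; each statement's English description precedes it below -/
import Mathlib

section
/- Let L : ℝ^p → ℝ be convex and differentiable, η > 0, and suppose β̂ minimizes β ↦ L(β) + η‖β‖₁ over ℝ^p. If ‖∇L(β₀)‖_∞ ≤ η/2 for some β₀ ∈ ℝ^p, then for any index set S ⊆ {1,…,p}, the error w = β̂ − β₀ lies in the cone ‖w_{S^c}‖₁ ≤ 3‖w_S‖₁ + 4‖(β₀)_{S^c}‖₁. -/
/-!
Since `L` is convex, `L β̂ - L β₀` dominates the directional derivative `∇L(β₀) · w`, which by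
Hölder and the gradient bound is at least `-(η/2) ‖w‖₁`. Comparing the penalised objective at `β̂`
and at `β₀` therefore gives `‖β̂‖₁ ≤ ‖β₀‖₁ + ‖w‖₁ / 2`, and the cone condition follows from this by
splitting every `ℓ₁` norm along `S` and `Sᶜ` and applying the triangle inequality coordinatewise.
-/

open Finset

theorem ConvexOn.fderiv_apply_sub_le {E : Type*} [NormedAddCommGroup E] [NormedSpace ℝ E]
    {s : Set E} {f : E → ℝ} (hf : ConvexOn ℝ s f) {x y : E} (hx : x ∈ s) (hy : y ∈ s)
    (hfx : DifferentiableAt ℝ f x) :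
    fderiv ℝ f x (y - x) ≤ f y - f x := by
  set g : ℝ →ᵃ[ℝ] E := AffineMap.lineMap x y
  have hg : HasDerivAt (f ∘ g) (fderiv ℝ f x (y - x)) 0 := by
    have hfg : HasFDerivAt f (fderiv ℝ f x) (g 0) := by
      simpa [g] using hfx.hasFDerivAt
    exact hfg.comp_hasDerivAt 0 AffineMap.hasDerivAt_lineMap
  have h0 : (0 : ℝ) ∈ g ⁻¹' s := by simpa [g] using hx
  have h1 : (1 : ℝ) ∈ g ⁻¹' s := by simpa [g] using hy
  simpa [slope, g] using (hf.comp_affineMap g).le_slope_of_hasDerivAt h0 h1 one_pos hg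

theorem abs_apply_le_mul_sum_abs {ι : Type*} [Fintype ι] [DecidableEq ι]
    (f : (ι → ℝ) →L[ℝ] ℝ) {c : ℝ} (hf : ∀ i, |f (Pi.single i 1)| ≤ c) (w : ι → ℝ) :
    |f w| ≤ c * ∑ i, |w i| := by
  have hexpand : f w = ∑ i, w i * f (Pi.single i 1) := by
    conv_lhs => rw [← Finset.univ_sum_single w]
    simp only [map_sum]
    refine Finset.sum_congr rfl fun i _ => ?_
    rw [← smul_eq_mul, ← map_smul, ← Pi.single_smul', smul_eq_mul, mul_one]
  calc |f w| ≤ ∑ i, |w i * f (Pi.single i 1)| := hexpand ▸ Finset.abs_sum_le_sum_abs _ _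
    _ ≤ ∑ i, |w i| * c := by
        gcongr with i
        rw [abs_mul]
        exact mul_le_mul_of_nonneg_left (hf i) (abs_nonneg _)
    _ = c * ∑ i, |w i| := by rw [← Finset.sum_mul, mul_comm]

theorem sum_compl_abs_sub_le_of_sum_abs_le {ι : Type*} [Fintype ι] [DecidableEq ι]
    {a b : ι → ℝ} (S : Finset ι)
    (h : ∑ i, |b i| ≤ ∑ i, |a i| + 1 / 2 * ∑ i, |b i - a i|) :
    ∑ i ∈ Sᶜ, |b i - a i| ≤ 3 * ∑ i ∈ S, |b i - a i| + 4 * ∑ i ∈ Sᶜ, |a i| := by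
  have hS : ∑ i ∈ S, |a i| - ∑ i ∈ S, |b i - a i| ≤ ∑ i ∈ S, |b i| := by
    rw [← Finset.sum_sub_distrib]
    gcongr with i
    linarith [abs_sub_abs_le_abs_sub (a i) (b i), abs_sub_comm (a i) (b i)]
  have hSc : ∑ i ∈ Sᶜ, |b i - a i| - ∑ i ∈ Sᶜ, |a i| ≤ ∑ i ∈ Sᶜ, |b i| := by
    rw [← Finset.sum_sub_distrib]
    gcongr with i
    linarith [abs_sub (b i) (a i)]
  rw [← Finset.sum_add_sum_compl S, ← Finset.sum_add_sum_compl S (fun i => |a i|),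
    ← Finset.sum_add_sum_compl S (fun i => |b i - a i|)] at h
  linarith

theorem lasso_cone_condition {p : ℕ} (L : (Fin p → ℝ) → ℝ)
    (hconv : ConvexOn ℝ Set.univ L) (hdiff : Differentiable ℝ L)
    (η : ℝ) (hη : 0 < η)
    (βhat β₀ : Fin p → ℝ)
    (hmin : ∀ β : Fin p → ℝ,
      L βhat + η * ∑ i, |βhat i| ≤ L β + η * ∑ i, |β i|)
    (hgrad : ∀ i, |fderiv ℝ L β₀ (Pi.single i 1)| ≤ η / 2)
    (S : Finset (Fin p)) :
    ∑ i ∈ Sᶜ, |βhat i - β₀ i| ≤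
      3 * ∑ i ∈ S, |βhat i - β₀ i| + 4 * ∑ i ∈ Sᶜ, |β₀ i| := by
  apply sum_compl_abs_sub_le_of_sum_abs_le
  have hconvex := hconv.fderiv_apply_sub_le (Set.mem_univ β₀) (Set.mem_univ βhat) (hdiff β₀)
  have hholder := abs_apply_le_mul_sum_abs (fderiv ℝ L β₀) hgrad (βhat - β₀)
  simp only [Pi.sub_apply] at hholder
  have hpenalty : η * ∑ i, |βhat i| ≤ η * (∑ i, |β₀ i| + 1 / 2 * ∑ i, |βhat i - β₀ i|) := by
    linarith [hmin β₀, neg_abs_le (fderiv ℝ L β₀ (βhat - β₀))]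
  exact le_of_mul_le_mul_left hpenalty hη
end

section
/- Let Îβ, Iβ ∈ ℝ^p, δ ∈ [0,1), s ≥ 0, and h > 0. Suppose (i) max_i |Îβ_i − Iβ_i| ≤ h/2, (ii) Σ_{i=1}^p |Iβ_i|^δ ≤ s (with 0⁰ := 0), and (iii) the thresholded estimator is Ĩβ_i = s(Îβ_i)·1{|Îβ_i| ≥ h} where the shrinkage function satisfies |s(x) − x| ≤ h for all x. Then Σ_{i=1}^p |Ĩβ_i − Iβ_i| ≤ 5·s·h^{1−δ}. -/
/-!
Each coordinate error is at most `3 min(|β|, h)`: if the threshold kills the estimate, then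
`|β| ≤ |β̂| + h/2 < 3h/2`; if it keeps it, the error is at most `h + h/2`, while `|β| ≥ h/2`.
Interpolating, `min(|β|, h) ≤ h^(1-δ) |β|^δ`, and summing against the sparsity bound gives the claim.
-/

open Finset

lemma abs_threshold_sub_le {shrink : ℝ → ℝ} {b bhat h : ℝ}
    (hshrink : |shrink bhat - bhat| ≤ h) (hb : |bhat - b| ≤ h / 2) :
    |(if h ≤ |bhat| then shrink bhat else 0) - b| ≤ 3 * min |b| h := by
  have hbhat_le : |bhat| ≤ |b| + h / 2 := by
    have := abs_sub_abs_le_abs_sub bhat b; linarith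
  have hb_le : |b| ≤ |bhat| + h / 2 := by
    have := abs_sub_abs_le_abs_sub b bhat; rw [abs_sub_comm] at this; linarith
  split_ifs with hkeep
  · have herr : |shrink bhat - b| ≤ 3 * h / 2 := by
      calc |shrink bhat - b| ≤ |shrink bhat - bhat| + |bhat - b| := abs_sub_le _ _ _
        _ ≤ 3 * h / 2 := by linarith
    rcases min_cases |b| h with ⟨hmin, _⟩ | ⟨hmin, _⟩ <;> rw [hmin] <;> linarith
  · rw [zero_sub, abs_neg]
    have hh : 0 ≤ h := by linarith [abs_nonneg (bhat - b)]
    rcases min_cases |b| h with ⟨hmin, _⟩ | ⟨hmin, _⟩ <;> rw [hmin] <;> linarith [abs_nonneg b]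

lemma min_abs_le_rpow_mul_rpow {b h δ : ℝ} (hh : 0 ≤ h) (hδ0 : 0 ≤ δ) (hδ1 : δ ≤ 1) :
    min |b| h ≤ h ^ (1 - δ) * (if b = 0 then 0 else |b| ^ δ) := by
  split_ifs with hb
  · simp [hb, hh]
  rcases (le_min (abs_nonneg b) hh).eq_or_lt with hzero | hpos
  · rw [← hzero]; positivity
  · calc min |b| h = min |b| h ^ (1 - δ) * min |b| h ^ δ := by
          rw [← Real.rpow_add hpos, sub_add_cancel, Real.rpow_one]
      _ ≤ h ^ (1 - δ) * |b| ^ δ := by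
          gcongr
          exacts [min_le_right _ _, min_le_left _ _]

theorem thresholded_estimator_l1_bound_general {p : ℕ}
    (Ibhat Ib : Fin p → ℝ) (δ s h : ℝ)
    (hδ0 : 0 ≤ δ) (hδ1 : δ < 1) (hh : 0 < h)
    (shrink : ℝ → ℝ) (hshrink : ∀ x, |shrink x - x| ≤ h)
    (hmax : ∀ i, |Ibhat i - Ib i| ≤ h / 2)
    (hsparse : ∑ i, (if Ib i = 0 then (0 : ℝ) else |Ib i| ^ δ) ≤ s)
    (Ibtilde : Fin p → ℝ)
    (hdef : ∀ i, Ibtilde i = if h ≤ |Ibhat i| then shrink (Ibhat i) else 0) :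
    ∑ i, |Ibtilde i - Ib i| ≤ 5 * s * h ^ (1 - δ) := by
  have hcoord : ∀ i, |Ibtilde i - Ib i| ≤
      5 * h ^ (1 - δ) * (if Ib i = 0 then (0 : ℝ) else |Ib i| ^ δ) := fun i => by
    have hmin_nonneg : 0 ≤ min |Ib i| h := le_min (abs_nonneg _) hh.le
    calc |Ibtilde i - Ib i| ≤ 3 * min |Ib i| h :=
          hdef i ▸ abs_threshold_sub_le (hshrink _) (hmax i)
      _ ≤ 5 * min |Ib i| h := by linarith
      _ ≤ 5 * (h ^ (1 - δ) * (if Ib i = 0 then (0 : ℝ) else |Ib i| ^ δ)) := by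
          gcongr; exact min_abs_le_rpow_mul_rpow hh.le hδ0 hδ1.le
      _ = _ := (mul_assoc _ _ _).symm
  calc ∑ i, |Ibtilde i - Ib i|
      ≤ ∑ i, 5 * h ^ (1 - δ) * (if Ib i = 0 then (0 : ℝ) else |Ib i| ^ δ) :=
        sum_le_sum fun i _ => hcoord i
    _ = 5 * h ^ (1 - δ) * ∑ i, (if Ib i = 0 then (0 : ℝ) else |Ib i| ^ δ) := by rw [mul_sum]
    _ ≤ 5 * h ^ (1 - δ) * s := by gcongr
    _ = 5 * s * h ^ (1 - δ) := by ring

theorem thresholded_estimator_l1_bound {p : ℕ}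
    (Ibhat Ib : Fin p → ℝ) (δ s h : ℝ)
    (hδ0 : 0 ≤ δ) (hδ1 : δ < 1) (hs : 0 ≤ s) (hh : 0 < h)
    (shrink : ℝ → ℝ) (hshrink : ∀ x, |shrink x - x| ≤ h)
    (hmax : ∀ i, |Ibhat i - Ib i| ≤ h / 2)
    (hsparse : ∑ i, (if Ib i = 0 then (0 : ℝ) else |Ib i| ^ δ) ≤ s)
    (Ibtilde : Fin p → ℝ)
    (hdef : ∀ i, Ibtilde i = if h ≤ |Ibhat i| then shrink (Ibhat i) else 0) :
    ∑ i, |Ibtilde i - Ib i| ≤ 5 * s * h ^ (1 - δ) :=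
  thresholded_estimator_l1_bound_general Ibhat Ib δ s h hδ0 hδ1 hh shrink hshrink hmax hsparse
    Ibtilde hdef
end
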